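/- Let P₀ > 0, E₀ ∈ (0,1), Y₀ ∈ ℝ, and let A(τ) be the 3×3 matrix whose only nonzero entry is A^Y_P = 6π/P₀³ (the Jacobian ∂f̄/∂I evaluated at 𝙹(τ) = (P₀, E₀, Y₀ − 3πτ/P₀²)). Then: (i) the matrix 𝚁(τ) with rows (1,0,0), (0,1,0), ((6π/P₀³)τ, 0, 1) satisfies d𝚁/dτ = A(τ)𝚁, 𝚁(0) = 1₃, is invertible for all τ ≥ 0, and 𝚁(τ)^{-1} is the matrix with rows (1,0,0), (0,1,0), (−(6π/P₀³)τ, 0, 1); (ii) the functions 𝙺^P(τ) = (E₀²/(4P₀)) [cos(2Y₀) − cos(2Y₀ − 6πτ/P₀²)], 𝙺^E(τ) = −((10E₀ − E₀³)/(8P₀²)) [cos(2Y₀) − cos(2Y₀ − 6πτ/P₀²)], 𝙺^Y(τ) = (3π/(16P₀⁴)) [34 + 25E₀² + 8E₀² cos(2Y₀)] τ + ((20 + E₀²)/(16P₀²)) [sin(2Y₀) − sin(2Y₀ − 6πτ/P₀²)] solve d𝙺/dτ = A(τ)𝙺 + p̄(𝙹(τ)), 𝙺(0) = 0. -/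

import Mathlib

/-! Since `A² = 0`, `𝚁(τ) = 1 + τA` with inverse `1 - τA`, and `A𝚁 = A` is its derivative.
For `𝙺`, the matrix `A` only feeds `(6π/P₀³) 𝙺^P` into the `Y`-equation, and along `𝙹(τ)` the
phase `2Y` equals `2Y₀ - 6πτ/P₀²`, so each component is checked by the chain rule. -/

open Real Matrix

/-- The Jacobian `∂f̄/∂I` of the averaged J₂ vector field at the averaged solution:
only nonzero entry is `A^Y_P = 6π/P₀³`. -/
noncomputable def Amat (P₀ : ℝ) : Matrix (Fin 3) (Fin 3) ℝ :=
  !![0, 0, 0; 0, 0, 0; 6 * π / P₀ ^ 3, 0, 0]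

/-- The fundamental matrix `𝚁(τ)`. -/
noncomputable def Rmat (P₀ τ : ℝ) : Matrix (Fin 3) (Fin 3) ℝ :=
  !![1, 0, 0; 0, 1, 0; 6 * π / P₀ ^ 3 * τ, 0, 1]

/-- The claimed inverse of `𝚁(τ)`. -/
noncomputable def RmatInv (P₀ τ : ℝ) : Matrix (Fin 3) (Fin 3) ℝ :=
  !![1, 0, 0; 0, 1, 0; -(6 * π / P₀ ^ 3) * τ, 0, 1]

/-- The function `p̄ = (p̄^P, p̄^E, p̄^Y)`. -/
noncomputable def pbarVec (P E Y : ℝ) : Fin 3 → ℝ :=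
  ![-(3 * π * E ^ 2 / (2 * P ^ 3)) * sin (2 * Y),
    (3 * π / (4 * P ^ 4)) * (10 * E - E ^ 3) * sin (2 * Y),
    (3 * π / (16 * P ^ 4)) * (34 + 25 * E ^ 2 + (40 + 10 * E ^ 2) * cos (2 * Y))]

/-- The vector `𝙺(τ)`. -/
noncomputable def Kvec (P₀ E₀ Y₀ τ : ℝ) : Fin 3 → ℝ :=
  ![(E₀ ^ 2 / (4 * P₀)) * (cos (2 * Y₀) - cos (2 * Y₀ - 6 * π / P₀ ^ 2 * τ)),
    -((10 * E₀ - E₀ ^ 3) / (8 * P₀ ^ 2)) * (cos (2 * Y₀) - cos (2 * Y₀ - 6 * π / P₀ ^ 2 * τ)),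
    (3 * π / (16 * P₀ ^ 4)) * (34 + 25 * E₀ ^ 2 + 8 * E₀ ^ 2 * cos (2 * Y₀)) * τ
      + ((20 + E₀ ^ 2) / (16 * P₀ ^ 2)) * (sin (2 * Y₀) - sin (2 * Y₀ - 6 * π / P₀ ^ 2 * τ))]

theorem hasDerivAt_cos_sub_cos_const_sub_mul (a c τ : ℝ) :
    HasDerivAt (fun t => cos a - cos (a - c * t)) (-(c * sin (a - c * τ))) τ := by
  have h := ((hasDerivAt_id' τ).const_mul c).const_sub a
  exact (h.cos.const_sub (cos a)).congr_deriv (by ring)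

theorem hasDerivAt_sin_sub_sin_const_sub_mul (a c τ : ℝ) :
    HasDerivAt (fun t => sin a - sin (a - c * t)) (c * cos (a - c * τ)) τ := by
  have h := ((hasDerivAt_id' τ).const_mul c).const_sub a
  exact (h.sin.const_sub (sin a)).congr_deriv (by ring)

section SquareZero

variable {R A : Type*} [CommRing R] [Ring A] [Algebra R A] {N : A}

theorem one_add_smul_mul_one_sub_smul (hN : N * N = 0) (τ : R) :
    (1 + τ • N) * (1 - τ • N) = 1 := by
  simp [add_mul, mul_sub, hN]

theorem one_sub_smul_mul_one_add_smul (hN : N * N = 0) (τ : R) :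
    (1 - τ • N) * (1 + τ • N) = 1 := by
  simp [sub_mul, mul_add, hN]

theorem mul_one_add_smul_eq_self (hN : N * N = 0) (τ : R) :
    N * (1 + τ • N) = N := by
  simp [mul_add, hN]

end SquareZero

theorem Matrix.hasDerivAt_one_add_smul_apply {n : Type*} [DecidableEq n] (N : Matrix n n ℝ)
    (τ : ℝ) (i j : n) : HasDerivAt (fun t => (1 + t • N) i j) (N i j) τ := by
  simpa using ((hasDerivAt_id' τ).mul_const (N i j)).const_add ((1 : Matrix n n ℝ) i j)

section Fundamental

variable (P₀ τ : ℝ)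

theorem Amat_mul_self : Amat P₀ * Amat P₀ = 0 := by
  ext i j
  fin_cases i <;> fin_cases j <;> simp [Amat, mul_apply, Fin.sum_univ_three]

theorem Rmat_eq : Rmat P₀ τ = 1 + τ • Amat P₀ := by
  ext i j
  fin_cases i <;> fin_cases j <;> simp [Rmat, Amat, one_apply, mul_comm]

theorem RmatInv_eq : RmatInv P₀ τ = 1 - τ • Amat P₀ := by
  ext i j
  fin_cases i <;> fin_cases j <;> simp [RmatInv, Amat, one_apply, mul_comm]

end Fundamental

section Forced

variable (P₀ E₀ Y₀ τ : ℝ)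

theorem Amat_mulVec (v : Fin 3 → ℝ) : Amat P₀ *ᵥ v = ![0, 0, 6 * π / P₀ ^ 3 * v 0] := by
  ext i
  fin_cases i <;> simp [Amat, mulVec, dotProduct, Fin.sum_univ_three]

theorem Kvec_zero : Kvec P₀ E₀ Y₀ 0 = 0 := by
  ext i
  fin_cases i <;> simp [Kvec]

variable {P₀}

theorem hasDerivAt_Kvec_apply (hP₀ : P₀ ≠ 0) (i : Fin 3) :
    HasDerivAt (fun t => Kvec P₀ E₀ Y₀ t i)
      ((Amat P₀ *ᵥ Kvec P₀ E₀ Y₀ τ) i + pbarVec P₀ E₀ (Y₀ - 3 * π / P₀ ^ 2 * τ) i) τ := by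
  have hY : 2 * (Y₀ - 3 * π / P₀ ^ 2 * τ) = 2 * Y₀ - 6 * π / P₀ ^ 2 * τ := by ring
  have hcos := hasDerivAt_cos_sub_cos_const_sub_mul (2 * Y₀) (6 * π / P₀ ^ 2) τ
  have hsin := hasDerivAt_sin_sub_sin_const_sub_mul (2 * Y₀) (6 * π / P₀ ^ 2) τ
  rw [Amat_mulVec]
  fin_cases i <;> simp only [Kvec, pbarVec, hY, Fin.isValue, Fin.zero_eta, Fin.mk_one,
    Fin.reduceFinMk, cons_val_zero, cons_val_one, cons_val_two, head_cons, tail_cons]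
  · refine (hcos.const_mul (E₀ ^ 2 / (4 * P₀))).congr_deriv ?_
    field_simp
    ring
  · refine (hcos.const_mul (-((10 * E₀ - E₀ ^ 3) / (8 * P₀ ^ 2)))).congr_deriv ?_
    field_simp
    ring
  · refine (((hasDerivAt_id' τ).const_mul
      (3 * π / (16 * P₀ ^ 4) * (34 + 25 * E₀ ^ 2 + 8 * E₀ ^ 2 * cos (2 * Y₀)))).add
      (hsin.const_mul ((20 + E₀ ^ 2) / (16 * P₀ ^ 2)))).congr_deriv ?_
    field_simp
    ring

end Forced

theorem stmt_8_general (P₀ E₀ Y₀ : ℝ) (hP₀ : 0 < P₀) :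
    Rmat P₀ 0 = 1
    ∧ Kvec P₀ E₀ Y₀ 0 = 0
    ∧ ∀ τ : ℝ, 0 ≤ τ →
        (∀ i j, HasDerivAt (fun t => Rmat P₀ t i j) ((Amat P₀ * Rmat P₀ τ) i j) τ)
        ∧ Rmat P₀ τ * RmatInv P₀ τ = 1
        ∧ RmatInv P₀ τ * Rmat P₀ τ = 1
        ∧ IsUnit (Rmat P₀ τ)
        ∧ ∀ i, HasDerivAt (fun t => Kvec P₀ E₀ Y₀ t i)
            ((Amat P₀ *ᵥ Kvec P₀ E₀ Y₀ τ) i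
              + pbarVec P₀ E₀ (Y₀ - 3 * π / P₀ ^ 2 * τ) i) τ := by
  have hA := Amat_mul_self P₀
  refine ⟨by simp [Rmat_eq], Kvec_zero P₀ E₀ Y₀, fun τ _ => ?_⟩
  simp only [Rmat_eq, RmatInv_eq, mul_one_add_smul_eq_self hA]
  exact ⟨hasDerivAt_one_add_smul_apply _ τ, one_add_smul_mul_one_sub_smul hA τ,
    one_sub_smul_mul_one_add_smul hA τ, .of_mul_eq_one _ (one_add_smul_mul_one_sub_smul hA τ),
    hasDerivAt_Kvec_apply E₀ Y₀ τ hP₀.ne'⟩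

/-- In the J₂ polar satellite problem: `𝚁(τ)` solves `d𝚁/dτ = A𝚁`, `𝚁(0) = 1`, is
invertible with the indicated inverse, and `𝙺(τ)` solves `d𝙺/dτ = A𝙺 + p̄(𝙹(τ))`,
`𝙺(0) = 0`. -/
theorem stmt_8 (P₀ E₀ Y₀ : ℝ) (hP₀ : 0 < P₀) (hE₀0 : 0 < E₀) (hE₀1 : E₀ < 1) :
    Rmat P₀ 0 = 1
    ∧ Kvec P₀ E₀ Y₀ 0 = 0
    ∧ ∀ τ : ℝ, 0 ≤ τ →
        (∀ i j, HasDerivAt (fun t => Rmat P₀ t i j) ((Amat P₀ * Rmat P₀ τ) i j) τ)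
        ∧ Rmat P₀ τ * RmatInv P₀ τ = 1
        ∧ RmatInv P₀ τ * Rmat P₀ τ = 1
        ∧ IsUnit (Rmat P₀ τ)
        ∧ ∀ i, HasDerivAt (fun t => Kvec P₀ E₀ Y₀ t i)
            ((Amat P₀ *ᵥ Kvec P₀ E₀ Y₀ τ) i
              + pbarVec P₀ E₀ (Y₀ - 3 * π / P₀ ^ 2 * τ) i) τ :=
  stmt_8_general P₀ E₀ Y₀ hP₀
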